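/- Suppose a, b, c, d are nonnegative integers and s is a nonnegative rational number satisfying: (1) a + b + c = 8; (2) 0 ≤ d ≤ c; (3) (a+b)/16 + d/2 + s = 1/2; (4) b/2 + c/16 + s is an integer that is either 0 or at least 2. Then d = 0, c ∈ {0, 4}, and: if c = 4 then a = 1, b = 3, s = 1/4; if c = 0 then s = 0 and b ∈ {0, 4, 6, 8}. -/

import Mathlib

/-!
Eliminating `a + b` between (1) and (3) gives `s = c/16 - d/2`, so `s ≥ 0` forces `8d ≤ c`, and
the integrality condition (4) becomes the linear equation `4b + c = 4d + 8m` over `ℤ`. Since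
`c ≤ 8`, this leaves only finitely many cases, and excluding `m = 1` kills all but the listed ones.
-/

theorem rest_weight_eq {a b c d : ℕ} {s : ℚ} (h1 : a + b + c = 8)
    (h3 : ((a : ℚ) + b) / 16 + (d : ℚ) / 2 + s = 1 / 2) :
    s = (c : ℚ) / 16 - (d : ℚ) / 2 := by
  have h1' : (a : ℚ) + b + c = 8 := by exact_mod_cast h1
  linarith

theorem fusion_counts_of_linear {a b c d : ℕ} {m : ℤ} (h1 : a + b + c = 8) (hd : 8 * d ≤ c)
    (hm : 4 * (b : ℤ) + c = 4 * d + 8 * m) (hm' : m = 0 ∨ 2 ≤ m) :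
    d = 0 ∧ (c = 0 ∨ c = 4) ∧ (c = 4 → a = 1 ∧ b = 3)
      ∧ (c = 0 → b = 0 ∨ b = 4 ∨ b = 6 ∨ b = 8) := by
  omega

theorem fusion_rule_arithmetic_general
    (a b c d : ℕ) (s : ℚ) (hs : 0 ≤ s)
    (h1 : a + b + c = 8)
    (h3 : ((a : ℚ) + b) / 16 + (d : ℚ) / 2 + s = 1 / 2)
    (h4 : ∃ m : ℤ, (b : ℚ) / 2 + (c : ℚ) / 16 + s = (m : ℚ) ∧ (m = 0 ∨ 2 ≤ m)) :
    d = 0 ∧ (c = 0 ∨ c = 4)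
      ∧ (c = 4 → a = 1 ∧ b = 3 ∧ s = 1 / 4)
      ∧ (c = 0 → s = 0 ∧ (b = 0 ∨ b = 4 ∨ b = 6 ∨ b = 8)) := by
  obtain ⟨m, hm, hm'⟩ := h4
  have hs_eq := rest_weight_eq h1 h3
  have hd : 8 * d ≤ c := by
    have : 8 * (d : ℚ) ≤ c := by linarith
    exact_mod_cast this
  have hlin : 4 * (b : ℤ) + c = 4 * d + 8 * m := by
    have : 4 * (b : ℚ) + c = 4 * d + 8 * m := by linarith
    exact_mod_cast this
  obtain ⟨hd0, hc, hc4, hc0⟩ := fusion_counts_of_linear h1 hd hlin hm'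
  subst hd0
  refine ⟨rfl, hc, fun h => ⟨(hc4 h).1, (hc4 h).2, ?_⟩, fun h => ⟨?_, hc0 h⟩⟩
  · rw [hs_eq, h]; norm_num
  · rw [hs_eq, h]; norm_num

/-- The arithmetic of the fusion-rule analysis: if `a + b + c = 8`, `0 ≤ d ≤ c`,
`(a+b)/16 + d/2 + s = 1/2` and `b/2 + c/16 + s` is an integer equal to `0` or at least `2`
(with `s ≥ 0`), then `d = 0`, `c ∈ {0,4}`, and the stated consequences hold. -/
theorem fusion_rule_arithmetic
    (a b c d : ℕ) (s : ℚ) (hs : 0 ≤ s)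
    (h1 : a + b + c = 8)
    (h2 : d ≤ c)
    (h3 : ((a : ℚ) + b) / 16 + (d : ℚ) / 2 + s = 1 / 2)
    (h4 : ∃ m : ℤ, (b : ℚ) / 2 + (c : ℚ) / 16 + s = (m : ℚ) ∧ (m = 0 ∨ 2 ≤ m)) :
    d = 0 ∧ (c = 0 ∨ c = 4)
      ∧ (c = 4 → a = 1 ∧ b = 3 ∧ s = 1 / 4)
      ∧ (c = 0 → s = 0 ∧ (b = 0 ∨ b = 4 ∨ b = 6 ∨ b = 8)) :=
  fusion_rule_arithmetic_general a b c d s hs h1 h3 h4
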